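/- Let R be a (left) nearfield which is not distributive, i.e. there exist α, β, λ ∈ R with (α+β)·λ ≠ α·λ + β·λ, and let n be a positive integer and 0 ≤ k ≤ n. The number of subspaces N of R^n whose support { j ∈ {1,…,n} : there exists x ∈ N with x_j ≠ 0 } has cardinality k is exactly the binomial coefficient C(n,k). -/

import Mathlib

/-- A (left) nearfield: `(R,+)` is an abelian group, multiplication is associative
with identity `1 ≠ 0`, every nonzero element has a two-sided inverse,
`0` multiplies to `0` on both sides, and the left distributive law holds. -/
class Nearfield (R : Type*) extends AddCommGroup R, One R, Mul R where
  mul_assoc : ∀ a b c : R, a * b * c = a * (b * c)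
  one_mul : ∀ a : R, 1 * a = a
  mul_one : ∀ a : R, a * 1 = a
  one_ne_zero : (1 : R) ≠ 0
  zero_mul : ∀ a : R, 0 * a = 0
  mul_zero : ∀ a : R, a * 0 = 0
  left_distrib : ∀ a b c : R, a * (b + c) = a * b + a * c
  exists_inv : ∀ a : R, a ≠ 0 → ∃ b : R, a * b = 1 ∧ b * a = 1

variable {R : Type*} [Nearfield R] {n : ℕ}

/-- Right scalar multiplication on `R^n`: `(x · r) j = x j * r`. -/
def vsmul (x : Fin n → R) (r : R) : Fin n → R := fun j => x j * r

/-- An `R`-subgroup of `R^n`: an additive subgroup closed under right scalar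
multiplication. -/
def IsRSubgroup (S : Set (Fin n → R)) : Prop :=
  (0 : Fin n → R) ∈ S ∧ (∀ x ∈ S, ∀ y ∈ S, x + y ∈ S) ∧ (∀ x ∈ S, -x ∈ S) ∧
    ∀ x ∈ S, ∀ r : R, vsmul x r ∈ S

/-- `nvGen V` is the smallest `R`-subgroup of `R^n` containing `V`
(the intersection of all `R`-subgroups containing `V`). -/
def nvGen (V : Set (Fin n → R)) : Set (Fin n → R) :=
  { x | ∀ S : Set (Fin n → R), IsRSubgroup S → V ⊆ S → x ∈ S }

/-- A subspace of `R^n`: an additive subgroup `N` with `(x+y)·r − x·r ∈ N`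
for all `x ∈ R^n`, `y ∈ N`, `r ∈ R`. -/
def IsSubspace (N : Set (Fin n → R)) : Prop :=
  (0 : Fin n → R) ∈ N ∧ (∀ x ∈ N, ∀ y ∈ N, x + y ∈ N) ∧ (∀ x ∈ N, -x ∈ N) ∧
    ∀ x : Fin n → R, ∀ y ∈ N, ∀ r : R, vsmul (x + y) r - vsmul x r ∈ N

/-- `nvSpan V` is the smallest subspace of `R^n` containing `V`. -/
def nvSpan (V : Set (Fin n → R)) : Set (Fin n → R) :=
  { x | ∀ N : Set (Fin n → R), IsSubspace N → V ⊆ N → x ∈ N }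

/-- `nvLC V 0 = V` and `nvLC V (m+1)` is the set of all finite right `R`-linear
combinations of elements of `nvLC V m`. -/
def nvLC (V : Set (Fin n → R)) : ℕ → Set (Fin n → R)
  | 0 => V
  | m + 1 => { x | ∃ F : Finset (Fin n → R), ↑F ⊆ nvLC V m ∧
      ∃ lam : (Fin n → R) → R, x = ∑ w ∈ F, vsmul w (lam w) }

/-!
In a non-distributive nearfield every subspace `N` of `R^n` is the coordinate subspace on its
support. If `y ∈ N` has `y j ≠ 0`, the subspace axiom applied to `x = a e_j` and `y` produces
`((a + y_j) λ - a λ - y_j λ) e_j ∈ N`; rescaling a failure of right distributivity by `y_j`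
makes this coefficient nonzero for a suitable `a`, so `N` contains the whole `j`-th axis and
hence every vector supported on its support. Subspaces with support of size `k` therefore
correspond to the `k`-subsets of `{1, …, n}`.
-/

namespace Nearfield

theorem mul_sub (a x y : R) : a * (x - y) = a * x - a * y := by
  rw [eq_sub_iff_add_eq, ← left_distrib, sub_add_cancel]

theorem eq_zero_of_mul_eq_zero {d t : R} (hd : d ≠ 0) (h : d * t = 0) : t = 0 := by
  obtain ⟨d', -, hd'⟩ := exists_inv d hd
  rw [← one_mul t, ← hd', Nearfield.mul_assoc, h, mul_zero]

def distribDefect (a b c : R) : R := (a + b) * c - a * c - b * c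

theorem distribDefect_ne_zero_iff {a b c : R} :
    distribDefect a b c ≠ 0 ↔ (a + b) * c ≠ a * c + b * c := by
  rw [distribDefect, sub_sub, Ne, sub_eq_zero]

theorem distribDefect_zero_right (a c : R) : distribDefect a 0 c = 0 := by
  rw [distribDefect, add_zero, zero_mul, sub_zero, sub_self]

theorem distribDefect_mul_left (u a b c : R) :
    distribDefect (u * a) (u * b) c = u * distribDefect a b c := by
  rw [distribDefect, distribDefect, ← left_distrib, Nearfield.mul_assoc, Nearfield.mul_assoc,
    Nearfield.mul_assoc, mul_sub, mul_sub]

theorem exists_distribDefect_ne_zero {α β c : R} (h : distribDefect α β c ≠ 0) {d : R}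
    (hd : d ≠ 0) : ∃ a, distribDefect a d c ≠ 0 := by
  have hβ : β ≠ 0 := by
    rintro rfl
    exact h (distribDefect_zero_right α c)
  obtain ⟨β', -, hβ'⟩ := exists_inv β hβ
  have hu : d * β' * β = d := by rw [Nearfield.mul_assoc, hβ', mul_one]
  have hu0 : d * β' ≠ 0 := by
    intro h0
    rw [h0, zero_mul] at hu
    exact hd hu.symm
  refine ⟨d * β' * α, fun h0 => h (eq_zero_of_mul_eq_zero hu0 ?_)⟩
  rwa [← distribDefect_mul_left, hu]

end Nearfield

open Nearfield

theorem vsmul_single (j : Fin n) (a r : R) : vsmul (Pi.single j a) r = Pi.single j (a * r) := by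
  funext i
  by_cases h : i = j
  · subst h; simp [vsmul]
  · simp [vsmul, h, Nearfield.zero_mul]

namespace IsSubspace

variable {N : Set (Fin n → R)}

theorem vsmul_mem (hN : IsSubspace N) {y : Fin n → R} (hy : y ∈ N) (r : R) : vsmul y r ∈ N := by
  have h := hN.2.2.2 0 y hy r
  rwa [zero_add, show vsmul (0 : Fin n → R) r = 0 from funext fun _ => zero_mul r,
    sub_zero] at h

theorem sub_mem (hN : IsSubspace N) {x y : Fin n → R} (hx : x ∈ N) (hy : y ∈ N) : x - y ∈ N := by
  rw [sub_eq_add_neg]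
  exact hN.2.1 x hx (-y) (hN.2.2.1 y hy)

theorem sum_mem (hN : IsSubspace N) {ι : Type*} (s : Finset ι) {f : ι → Fin n → R}
    (h : ∀ i ∈ s, f i ∈ N) : ∑ i ∈ s, f i ∈ N := by
  classical
  induction s using Finset.induction_on with
  | empty => simpa using hN.1
  | insert i s hi ih =>
    rw [Finset.sum_insert hi]
    exact hN.2.1 _ (h i (Finset.mem_insert_self i s)) _
      (ih fun i hi => h i (Finset.mem_insert_of_mem hi))

theorem distribDefect_mem (hN : IsSubspace N) (x : Fin n → R) {y : Fin n → R} (hy : y ∈ N)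
    (r : R) : (fun i => distribDefect (x i) (y i) r) ∈ N :=
  hN.sub_mem (hN.2.2.2 x y hy r) (hN.vsmul_mem hy r)

theorem single_mem (hd : ∃ α β c : R, (α + β) * c ≠ α * c + β * c) (hN : IsSubspace N)
    {y : Fin n → R} (hy : y ∈ N) {j : Fin n} (hyj : y j ≠ 0) (r : R) : Pi.single j r ∈ N := by
  obtain ⟨α, β, c, h⟩ := hd
  obtain ⟨a, ha⟩ := exists_distribDefect_ne_zero (distribDefect_ne_zero_iff.mpr h) hyj
  have hmem := hN.distribDefect_mem (Pi.single j a) hy c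
  have hsingle : (fun i => distribDefect ((Pi.single j a : Fin n → R) i) (y i) c) =
      Pi.single j (distribDefect a (y j) c) := by
    funext i
    by_cases hi : i = j
    · subst hi; simp
    · simp [hi, distribDefect, Nearfield.zero_mul]
  rw [hsingle] at hmem
  obtain ⟨e, he, -⟩ := exists_inv _ ha
  have := hN.vsmul_mem hmem (e * r)
  rwa [vsmul_single, ← Nearfield.mul_assoc, he, Nearfield.one_mul] at this

end IsSubspace

def coordSupport (N : Set (Fin n → R)) : Set (Fin n) := {j | ∃ x ∈ N, x j ≠ 0}

variable (R) in
def coordSubspace (T : Set (Fin n)) : Set (Fin n → R) := {x | ∀ j ∉ T, x j = 0}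

theorem coordSubspace_isSubspace (T : Set (Fin n)) : IsSubspace (coordSubspace R T) := by
  refine ⟨fun j _ => rfl, ?_, ?_, ?_⟩
  · intro x hx y hy j hj
    simp [hx j hj, hy j hj]
  · intro x hx j hj
    simp [hx j hj]
  · intro x y hy r j hj
    simp [vsmul, hy j hj]

theorem coordSupport_coordSubspace (T : Set (Fin n)) :
    coordSupport (coordSubspace R T) = T := by
  ext j
  constructor
  · rintro ⟨x, hx, hxj⟩
    by_contra hj
    exact hxj (hx j hj)
  · intro hj
    refine ⟨Pi.single j 1, fun i hi => ?_, by simp [Nearfield.one_ne_zero]⟩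
    simp [show i ≠ j by rintro rfl; exact hi hj]

theorem IsSubspace.eq_coordSubspace (hd : ∃ α β c : R, (α + β) * c ≠ α * c + β * c)
    {N : Set (Fin n → R)} (hN : IsSubspace N) : N = coordSubspace R (coordSupport N) := by
  ext x
  constructor
  · intro hx j hj
    by_contra hxj
    exact hj ⟨x, hx, hxj⟩
  · intro hx
    rw [← Finset.univ_sum_single x]
    refine hN.sum_mem _ fun j _ => ?_
    by_cases hxj : x j = 0
    · rw [hxj, Pi.single_zero]
      exact hN.1
    · obtain ⟨y, hy, hyj⟩ : j ∈ coordSupport N := by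
        by_contra hj
        exact hxj (hx j hj)
      exact hN.single_mem hd hy hyj (x j)

theorem card_subspaces_support_general
    (hd : ∃ α β lam : R, (α + β) * lam ≠ α * lam + β * lam)
    (k : ℕ) :
    { N : Set (Fin n → R) | IsSubspace N ∧
        ({ j : Fin n | ∃ x ∈ N, x j ≠ 0 }).ncard = k }.ncard = Nat.choose n k := by
  have hchoose : n.choose k = (Set.powersetCard (Fin n) k).ncard := by
    rw [← Nat.card_coe_set_eq, Set.powersetCard.card, Nat.card_fin]
  rw [hchoose]
  symm
  refine Set.ncard_congr (fun T _ => coordSubspace R (T : Set (Fin n))) ?_ ?_ ?_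
  · intro T hT
    refine ⟨coordSubspace_isSubspace _, ?_⟩
    rw [← coordSupport, coordSupport_coordSubspace, Set.ncard_coe_finset]
    exact hT
  · intro T₁ T₂ _ _ h
    simpa only [coordSupport_coordSubspace, Finset.coe_inj] using congrArg coordSupport h
  · rintro N ⟨hN, hk⟩
    have hfin := Set.toFinite (coordSupport N)
    refine ⟨hfin.toFinset, ?_, ?_⟩
    · rwa [Set.powersetCard.mem_iff, ← Set.ncard_eq_toFinset_card _ hfin]
    · rw [Set.Finite.coe_toFinset]
      exact (hN.eq_coordSubspace hd).symm

/-- in a non-distributive nearfield, the number of subspaces of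
`R^n` whose support has cardinality `k` is the binomial coefficient `C(n,k)`. -/
theorem card_subspaces_support
    (hd : ∃ α β lam : R, (α + β) * lam ≠ α * lam + β * lam)
    (hn : 0 < n) (k : ℕ) (hk : k ≤ n) :
    { N : Set (Fin n → R) | IsSubspace N ∧
        ({ j : Fin n | ∃ x ∈ N, x j ≠ 0 }).ncard = k }.ncard = Nat.choose n k :=
  card_subspaces_support_general hd k
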